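/- arXiv:2007.04382 — 5 statements merged into one kernel-verified Lean document; each statement's English description precedes it below -/
import Mathlib

section
/- Let $\|\cdot\|_X$ and $\|\cdot\|_Y$ be continuous quasinorms on $\mathbb{R}^n$, and suppose $\lambda>0$, $\mu\geq 1$ satisfy $\|x\|_X\leq\lambda\|x\|_Y\leq\mu\|x\|_X$ for all $x$. Then $\mu$ is minimal among all constants with this property (for some $\lambda$) if and only if there exist points $x\in S_X\cap\lambda^{-1}S_Y$ and $y\in\lambda^{-1}S_Y\cap\mu^{-1}S_X$. -/
open scoped Real

def IsQuasinorm {E : Type*} [AddCommGroup E] [Module ℝ E] (q : E → ℝ) : Prop :=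
  (∀ x, 0 ≤ q x) ∧ (∀ x, q x = 0 ↔ x = 0) ∧
  (∀ (c : ℝ) (x : E), q (c • x) = |c| * q x) ∧
  ∃ k : ℝ, 0 < k ∧ ∀ x y, q (x + y) ≤ k * (q x + q y)

def IsNormFn {E : Type*} [AddCommGroup E] [Module ℝ E] (q : E → ℝ) : Prop :=
  (∀ x, 0 ≤ q x) ∧ (∀ x, q x = 0 ↔ x = 0) ∧
  (∀ (c : ℝ) (x : E), q (c • x) = |c| * q x) ∧
  ∀ x y, q (x + y) ≤ q x + q y

def distSet {E : Type*} [AddCommGroup E] [Module ℝ E] (q r : E → ℝ) : Set ℝ :=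
  {μ : ℝ | 1 ≤ μ ∧ ∃ l : ℝ, 0 < l ∧ ∀ x, q x ≤ l * r x ∧ l * r x ≤ μ * q x}

noncomputable def multDist {E : Type*} [AddCommGroup E] [Module ℝ E] (q r : E → ℝ) : ℝ :=
  sInf (distSet q r)

/-- Lemma (soloy), first part: μ is minimal iff both sphere intersections are nonempty. -/
theorem stmt0 {n : ℕ} (q r : EuclideanSpace ℝ (Fin n) → ℝ)
    (hq : IsQuasinorm q) (hr : IsQuasinorm r) (hqc : Continuous q) (hrc : Continuous r)
    (l μ : ℝ) (hl : 0 < l) (hμ : 1 ≤ μ)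
    (h : ∀ x, q x ≤ l * r x ∧ l * r x ≤ μ * q x) :
    (∀ μ' l' : ℝ, 0 < l' → (∀ x, q x ≤ l' * r x ∧ l' * r x ≤ μ' * q x) → μ ≤ μ') ↔
      ((∃ x, q x = 1 ∧ l * r x = 1) ∧ (∃ y, l * r y = 1 ∧ μ * q y = 1)) := by
  obtain ⟨hq0, hqz, hqh, -⟩ := hq
  obtain ⟨hr0, hrz, hrh, -⟩ := hr
  have qpos : ∀ x : EuclideanSpace ℝ (Fin n), x ≠ 0 → 0 < q x := fun x hx =>
    lt_of_le_of_ne (hq0 x) (fun h' => hx ((hqz x).mp h'.symm))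
  have rpos : ∀ x : EuclideanSpace ℝ (Fin n), x ≠ 0 → 0 < r x := fun x hx =>
    lt_of_le_of_ne (hr0 x) (fun h' => hx ((hrz x).mp h'.symm))
  constructor
  · intro hmin
    by_cases htriv : ∀ x : EuclideanSpace ℝ (Fin n), x = 0
    · exfalso
      have := hmin 0 1 one_pos (fun x => by
        rw [htriv x, (hqz 0).mpr rfl, (hrz 0).mpr rfl]; norm_num)
      linarith
    · push_neg at htriv
      obtain ⟨z, hz⟩ := htriv
      set S := Metric.sphere (0 : EuclideanSpace ℝ (Fin n)) 1 with hS
      have hSmem : ∀ w : EuclideanSpace ℝ (Fin n), w ∈ S ↔ ‖w‖ = 1 := fun w =>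
        mem_sphere_zero_iff_norm
      have hSne : S.Nonempty := ⟨‖z‖⁻¹ • z, by
        rw [hSmem, norm_smul, norm_inv, norm_norm,
          inv_mul_cancel₀ (norm_ne_zero_iff.mpr hz)]⟩
      have hne : ∀ w ∈ S, w ≠ 0 := by
        intro w hw h0
        rw [hSmem, h0, norm_zero] at hw
        norm_num at hw
      set F : EuclideanSpace ℝ (Fin n) → ℝ := fun x => l * r x / q x with hF
      have Fcont : ContinuousOn F S :=
        (continuous_const.mul hrc).continuousOn.div hqc.continuousOn
          (fun x hx => ne_of_gt (qpos x (hne x hx)))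
      obtain ⟨x₀, hx₀S, hx₀min⟩ :=
        (isCompact_sphere (0 : EuclideanSpace ℝ (Fin n)) 1).exists_isMinOn hSne Fcont
      obtain ⟨y₀, hy₀S, hy₀max⟩ :=
        (isCompact_sphere (0 : EuclideanSpace ℝ (Fin n)) 1).exists_isMaxOn hSne Fcont
      have qx₀pos : 0 < q x₀ := qpos x₀ (hne x₀ hx₀S)
      have qy₀pos : 0 < q y₀ := qpos y₀ (hne y₀ hy₀S)
      have rx₀pos : 0 < r x₀ := rpos x₀ (hne x₀ hx₀S)
      have ry₀pos : 0 < r y₀ := rpos y₀ (hne y₀ hy₀S)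
      set A := F x₀ with hAdef
      set B := F y₀ with hBdef
      -- scale invariance of F
      have hFscale : ∀ x : EuclideanSpace ℝ (Fin n), x ≠ 0 →
          A ≤ F x ∧ F x ≤ B := by
        intro x hx
        have hcpos : (0:ℝ) < ‖x‖ := norm_pos_iff.mpr hx
        set v := ‖x‖⁻¹ • x with hv
        have hvS : v ∈ S := by
          rw [hSmem, hv, norm_smul, norm_inv, norm_norm,
            inv_mul_cancel₀ (ne_of_gt hcpos)]
        have hqv : q v = ‖x‖⁻¹ * q x := by
          rw [hv, hqh, abs_of_pos (inv_pos.mpr hcpos)]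
        have hrv : r v = ‖x‖⁻¹ * r x := by
          rw [hv, hrh, abs_of_pos (inv_pos.mpr hcpos)]
        have hFv : F v = F x := by
          rw [hF]
          simp only
          rw [hqv, hrv]
          field_simp
        constructor
        · have := hx₀min hvS
          simpa [hFv] using this
        · have := hy₀max hvS
          simpa [hFv] using this
      have hA1 : 1 ≤ A := by
        rw [hAdef, hF]
        exact (one_le_div qx₀pos).mpr (h x₀).1
      have hApos : (0:ℝ) < A := lt_of_lt_of_le one_pos hA1
      have hBμ : B ≤ μ := by
        rw [hBdef, hF]
        exact (div_le_iff₀ qy₀pos).mpr (h y₀).2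
      have hAB : A ≤ B := hx₀min hy₀S
      have hBpos : (0:ℝ) < B := lt_of_lt_of_le hApos hAB
      -- the pair (B/A, l/A) satisfies the sandwich condition
      have claim : ∀ x, q x ≤ (l / A) * r x ∧ (l / A) * r x ≤ (B / A) * q x := by
        intro x
        by_cases hx : x = 0
        · rw [hx, (hqz 0).mpr rfl, (hrz 0).mpr rfl]
          norm_num
        · have hqx : 0 < q x := qpos x hx
          obtain ⟨h1, h2⟩ := hFscale x hx
          have h1' : A * q x ≤ l * r x := (le_div_iff₀ hqx).mp h1
          have h2' : l * r x ≤ B * q x := (div_le_iff₀ hqx).mp h2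
          constructor
          · rw [div_mul_eq_mul_div, le_div_iff₀ hApos]
            nlinarith
          · rw [div_mul_eq_mul_div, div_mul_eq_mul_div, div_eq_mul_inv, div_eq_mul_inv]
            exact mul_le_mul_of_nonneg_right h2' (inv_nonneg.mpr hApos.le)
      have hμBA : μ ≤ B / A := hmin (B / A) (l / A) (div_pos hl hApos) claim
      have hBA : B / A ≤ B := div_le_self hBpos.le hA1
      have hμB : μ = B := le_antisymm (le_trans hμBA hBA) hBμ
      have hAone : A = 1 := by
        have h2 : B ≤ B / A := hμB ▸ hμBA
        have h3 : B * A ≤ B := (le_div_iff₀ hApos).mp h2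
        have h4 : A ≤ 1 := by nlinarith
        linarith
      have hx₀eq : l * r x₀ = q x₀ := by
        have : l * r x₀ / q x₀ = 1 := hAone
        field_simp at this
        linarith
      have hy₀eq : l * r y₀ = μ * q y₀ := by
        have : l * r y₀ / q y₀ = μ := hμB.symm
        field_simp at this
        linarith
      refine ⟨⟨(q x₀)⁻¹ • x₀, ?_, ?_⟩, (l * r y₀)⁻¹ • y₀, ?_, ?_⟩
      · rw [hqh, abs_of_pos (inv_pos.mpr qx₀pos), inv_mul_cancel₀ (ne_of_gt qx₀pos)]
      · rw [hrh, abs_of_pos (inv_pos.mpr qx₀pos), ← hx₀eq]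
        field_simp
      · rw [hrh, abs_of_pos (inv_pos.mpr (mul_pos hl ry₀pos))]
        field_simp
      · rw [hqh, abs_of_pos (inv_pos.mpr (mul_pos hl ry₀pos)), hy₀eq]
        have hμpos : (0:ℝ) < μ := lt_of_lt_of_le one_pos hμ
        field_simp
  · rintro ⟨⟨x, hqx, hrx⟩, ⟨y, hry, hqy⟩⟩ μ' l' hl' hcond
    have hμpos : (0:ℝ) < μ := lt_of_lt_of_le one_pos hμ
    have hrxv : r x = l⁻¹ := eq_inv_of_mul_eq_one_right hrx
    have hryv : r y = l⁻¹ := eq_inv_of_mul_eq_one_right hry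
    have hqyv : q y = μ⁻¹ := eq_inv_of_mul_eq_one_right hqy
    have h1 : (1:ℝ) ≤ l' * l⁻¹ := by
      have := (hcond x).1
      rw [hqx, hrxv] at this
      exact this
    have h2 : l' * l⁻¹ ≤ μ' * μ⁻¹ := by
      have := (hcond y).2
      rw [hryv, hqyv] at this
      exact this
    have h3 : (1:ℝ) ≤ μ' * μ⁻¹ := le_trans h1 h2
    rw [← div_eq_mul_inv] at h3
    exact (one_le_div hμpos).mp h3
end

section
/- For any continuous quasinorm $\|\cdot\|_X$ on $\mathbb{R}^n$, define $\|x\|_{\tilde{X}}=\|x\|_2^2/\|x\|_X$ for $x\neq 0$ and $\|0\|_{\tilde X}=0$. Then $\|\cdot\|_{\tilde X}$ is a continuous quasinorm and $d([\|\cdot\|_X],[\|\cdot\|_2])=d([\|\cdot\|_{\tilde X}],[\|\cdot\|_2])$. -/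
open scoped Real

lemma key_ineq (s t l μ : ℝ) (hs : 0 < s) (ht : 0 < t) (hl : 0 < l) (hμ : 1 ≤ μ)
    (h1 : t ≤ l * s) (h2 : l * s ≤ μ * t) :
    s ^ 2 / t ≤ μ / l * s ∧ μ / l * s ≤ μ * (s ^ 2 / t) := by
  constructor
  · rw [div_mul_eq_mul_div, div_le_div_iff₀ ht hl]
    nlinarith [mul_le_mul_of_nonneg_left h2 hs.le]
  · rw [div_mul_eq_mul_div, mul_div_assoc', div_le_div_iff₀ hl ht]
    nlinarith [mul_le_mul_of_nonneg_left h1 (by positivity : (0:ℝ) ≤ μ * s)]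

open Classical in
/-- The "opposite" quasinorm is a continuous quasinorm at the same distance from the Euclidean norm. -/
theorem stmt8 {n : ℕ} (q : EuclideanSpace ℝ (Fin n) → ℝ)
    (hq : IsQuasinorm q) (hqc : Continuous q) :
    IsQuasinorm (fun x : EuclideanSpace ℝ (Fin n) => if x = 0 then 0 else ‖x‖ ^ 2 / q x) ∧
    Continuous (fun x : EuclideanSpace ℝ (Fin n) => if x = 0 then 0 else ‖x‖ ^ 2 / q x) ∧
    multDist q (fun x => ‖x‖) =
      multDist (fun x : EuclideanSpace ℝ (Fin n) => if x = 0 then 0 else ‖x‖ ^ 2 / q x)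
        (fun x => ‖x‖) := by
  obtain ⟨hq0, hqz, hqh, k, hk, hqk⟩ := hq
  set qt : EuclideanSpace ℝ (Fin n) → ℝ :=
    fun x => if x = 0 then 0 else ‖x‖ ^ 2 / q x with hqtdef
  have hpos : ∀ x : EuclideanSpace ℝ (Fin n), x ≠ 0 → 0 < q x := fun x hx =>
    lt_of_le_of_ne (hq0 x) (fun h => hx ((hqz x).mp h.symm))
  have hqt0 : qt 0 = 0 := by simp [hqtdef]
  have hqtval : ∀ x : EuclideanSpace ℝ (Fin n), x ≠ 0 → qt x = ‖x‖ ^ 2 / q x := by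
    intro x hx; simp [hqtdef, hx]
  rcases subsingleton_or_nontrivial (EuclideanSpace ℝ (Fin n)) with hsub | hnt
  · have heq : qt = q := by
      funext x
      have hx : x = 0 := Subsingleton.elim x 0
      simp [hqtdef, hx, (hqz 0).mpr rfl]
    rw [heq]
    exact ⟨⟨hq0, hqz, hqh, k, hk, hqk⟩, hqc, rfl⟩
  · -- comparability constants
    obtain ⟨u, hu, hmin⟩ := (isCompact_sphere (0 : EuclideanSpace ℝ (Fin n)) 1).exists_isMinOn
      (NormedSpace.sphere_nonempty.mpr zero_le_one) hqc.continuousOn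
    obtain ⟨v, hv, hmax⟩ := (isCompact_sphere (0 : EuclideanSpace ℝ (Fin n)) 1).exists_isMaxOn
      (NormedSpace.sphere_nonempty.mpr zero_le_one) hqc.continuousOn
    have hu1 : ‖u‖ = 1 := by simpa using hu
    have hv1 : ‖v‖ = 1 := by simpa using hv
    have ha : 0 < q u := hpos u (by intro h; rw [h] at hu1; simp at hu1)
    have hb : 0 < q v := hpos v (by intro h; rw [h] at hv1; simp at hv1)
    set a := q u with hadef
    set b := q v with hbdef
    have hcomp : ∀ x : EuclideanSpace ℝ (Fin n), a * ‖x‖ ≤ q x ∧ q x ≤ b * ‖x‖ := by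
      intro x
      rcases eq_or_ne x 0 with rfl | hx
      · simp [(hqz 0).mpr rfl]
      · have hnx : 0 < ‖x‖ := norm_pos_iff.mpr hx
        set w : EuclideanSpace ℝ (Fin n) := ‖x‖⁻¹ • x with hwdef
        have hw : w ∈ Metric.sphere (0 : EuclideanSpace ℝ (Fin n)) 1 := by
          rw [mem_sphere_zero_iff_norm, hwdef, norm_smul, norm_inv, norm_norm,
            inv_mul_cancel₀ hnx.ne']
        have hxw : q x = ‖x‖ * q w := by
          have hx' : x = ‖x‖ • w := by
            rw [hwdef, smul_smul, mul_inv_cancel₀ hnx.ne', one_smul]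
          rw [hx', hqh, abs_of_pos hnx]
          rw [← hx']
        have hm1 : a ≤ q w := isMinOn_iff.mp hmin w hw
        have hm2 : q w ≤ b := isMaxOn_iff.mp hmax w hw
        constructor
        · rw [hxw]
          nlinarith
        · rw [hxw]
          nlinarith
    have hqt_ub : ∀ x : EuclideanSpace ℝ (Fin n), qt x ≤ ‖x‖ / a := by
      intro x
      rcases eq_or_ne x 0 with rfl | hx
      · simp [hqt0]
      · have hnx : 0 < ‖x‖ := norm_pos_iff.mpr hx
        have hqx := hpos x hx
        rw [hqtval x hx, div_le_div_iff₀ hqx ha]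
        nlinarith [(hcomp x).1]
    have hqt_lb : ∀ x : EuclideanSpace ℝ (Fin n), ‖x‖ / b ≤ qt x := by
      intro x
      rcases eq_or_ne x 0 with rfl | hx
      · simp [hqt0]
      · have hnx : 0 < ‖x‖ := norm_pos_iff.mpr hx
        have hqx := hpos x hx
        rw [hqtval x hx, div_le_div_iff₀ hb hqx]
        nlinarith [(hcomp x).2]
    have hqt_nonneg : ∀ x, 0 ≤ qt x := by
      intro x
      rcases eq_or_ne x 0 with rfl | hx
      · simp [hqt0]
      · rw [hqtval x hx]
        exact div_nonneg (by positivity) (hq0 x)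
    have hqt_pos : ∀ x : EuclideanSpace ℝ (Fin n), x ≠ 0 → 0 < qt x := by
      intro x hx
      rw [hqtval x hx]
      exact div_pos (pow_pos (norm_pos_iff.mpr hx) 2) (hpos x hx)
    refine ⟨⟨hqt_nonneg, ?_, ?_, b / a, div_pos hb ha, ?_⟩, ?_, ?_⟩
    · -- zero iff
      intro x
      constructor
      · intro h
        by_contra hx
        exact (hqt_pos x hx).ne' h
      · rintro rfl; exact hqt0
    · -- homogeneity
      intro c x
      rcases eq_or_ne c 0 with rfl | hc
      · simp [hqt0]
      rcases eq_or_ne x 0 with rfl | hx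
      · simp [hqt0]
      have hcx : c • x ≠ 0 := smul_ne_zero hc hx
      rw [hqtval _ hcx, hqtval x hx, norm_smul, hqh, Real.norm_eq_abs]
      have hqx := (hpos x hx).ne'
      have hc' : |c| ≠ 0 := abs_ne_zero.mpr hc
      field_simp
    · -- quasi-triangle
      intro x y
      have h1 : ‖x‖ ≤ b * qt x := (div_le_iff₀' hb).mp (hqt_lb x)
      have h2 : ‖y‖ ≤ b * qt y := (div_le_iff₀' hb).mp (hqt_lb y)
      calc qt (x + y) ≤ ‖x + y‖ / a := hqt_ub _
        _ ≤ (b * qt x + b * qt y) / a := by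
            gcongr
            exact le_trans (norm_add_le x y) (add_le_add h1 h2)
        _ = b / a * (qt x + qt y) := by ring
    · -- continuity
      rw [continuous_iff_continuousAt]
      intro x
      rcases eq_or_ne x 0 with rfl | hx
      · rw [ContinuousAt, hqt0]
        refine squeeze_zero hqt_nonneg hqt_ub ?_
        have : Continuous fun y : EuclideanSpace ℝ (Fin n) => ‖y‖ / a :=
          continuous_norm.div_const a
        simpa using this.tendsto 0
      · have hca : ContinuousAt (fun y : EuclideanSpace ℝ (Fin n) => ‖y‖ ^ 2 / q y) x :=
          ((continuous_norm.pow 2).continuousAt).div hqc.continuousAt (hpos x hx).ne'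
        refine hca.congr ?_
        filter_upwards [isOpen_compl_singleton.mem_nhds hx] with y hy
        exact (hqtval y hy).symm
    · -- distance equality
      have hset : distSet q (fun x : EuclideanSpace ℝ (Fin n) => ‖x‖) =
          distSet qt (fun x => ‖x‖) := by
        ext μ
        simp only [distSet, Set.mem_setOf_eq]
        constructor
        · rintro ⟨hμ, l, hl, h⟩
          refine ⟨hμ, μ / l, div_pos (lt_of_lt_of_le one_pos hμ) hl, fun x => ?_⟩
          rcases eq_or_ne x 0 with rfl | hx
          · simp [hqt0]
          · have hnx : 0 < ‖x‖ := norm_pos_iff.mpr hx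
            have hkey := key_ineq ‖x‖ (q x) l μ hnx (hpos x hx) hl hμ (h x).1 (h x).2
            rw [hqtval x hx]
            exact hkey
        · rintro ⟨hμ, l, hl, h⟩
          refine ⟨hμ, μ / l, div_pos (lt_of_lt_of_le one_pos hμ) hl, fun x => ?_⟩
          rcases eq_or_ne x 0 with rfl | hx
          · simp [(hqz 0).mpr rfl]
          · have hnx : 0 < ‖x‖ := norm_pos_iff.mpr hx
            have hqx := hpos x hx
            have hx1 := (h x).1
            have hx2 := (h x).2
            rw [hqtval x hx] at hx1 hx2
            have hkey := key_ineq ‖x‖ (‖x‖ ^ 2 / q x) l μ hnx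
              (div_pos (by positivity) hqx) hl hμ hx1 hx2
            have hcan : ‖x‖ ^ 2 / (‖x‖ ^ 2 / q x) = q x := by
              field_simp
            rw [hcan] at hkey
            exact hkey
      rw [multDist, multDist, hset]
end

section
/- The metric space of equivalence classes of continuous quasinorms on $\mathbb{R}^n$ modulo positive scaling, with distance $\log_2 d$ where $d$ is the multiplicative distance, is complete: every Cauchy sequence of (classes of) continuous quasinorms converges to a class of a continuous quasinorm. -/
open scoped Real

lemma quasi_equiv_norm {n : ℕ} (q : EuclideanSpace ℝ (Fin n) → ℝ)
    (hq : IsQuasinorm q) (hc : Continuous q) (x₀ : EuclideanSpace ℝ (Fin n)) (hx₀ : ‖x₀‖ = 1) :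
    ∃ c C : ℝ, 0 < c ∧ 0 < C ∧ ∀ x, c * ‖x‖ ≤ q x ∧ q x ≤ C * ‖x‖ := by
  obtain ⟨hpos, hzero, hhom, _⟩ := hq
  have hne : (Metric.sphere (0 : EuclideanSpace ℝ (Fin n)) 1).Nonempty :=
    ⟨x₀, mem_sphere_zero_iff_norm.mpr hx₀⟩
  obtain ⟨a, ha, hmin⟩ := (isCompact_sphere (0 : EuclideanSpace ℝ (Fin n)) 1).exists_isMinOn hne hc.continuousOn
  obtain ⟨b, hb, hmax⟩ := (isCompact_sphere (0 : EuclideanSpace ℝ (Fin n)) 1).exists_isMaxOn hne hc.continuousOn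
  have hna : ‖a‖ = 1 := mem_sphere_zero_iff_norm.mp ha
  have hca : 0 < q a := by
    rcases lt_or_eq_of_le (hpos a) with h | h
    · exact h
    · exfalso
      have : a = 0 := (hzero a).mp h.symm
      rw [this, norm_zero] at hna; norm_num at hna
  refine ⟨q a, max (q b) 1, hca, lt_of_lt_of_le one_pos (le_max_right _ _), fun x => ?_⟩
  rcases eq_or_ne x 0 with rfl | hx
  · simp [(hzero 0).mpr rfl]
  · have hnx : 0 < ‖x‖ := norm_pos_iff.mpr hx
    set u : EuclideanSpace ℝ (Fin n) := ‖x‖⁻¹ • x with hu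
    have hnu : ‖u‖ = 1 := by
      rw [hu, norm_smul, norm_inv, norm_norm, inv_mul_cancel₀ hnx.ne']
    have hqx : q x = ‖x‖ * q u := by
      have : x = ‖x‖ • u := by rw [hu, smul_smul, mul_inv_cancel₀ hnx.ne', one_smul]
      conv_lhs => rw [this]
      rw [hhom, abs_of_pos hnx]
    have h1 : q a ≤ q u := hmin (mem_sphere_zero_iff_norm.mpr hnu)
    have h2 : q u ≤ q b := hmax (mem_sphere_zero_iff_norm.mpr hnu)
    constructor
    · rw [hqx, mul_comm (q a)]
      exact mul_le_mul_of_nonneg_left h1 hnx.le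
    · rw [hqx]
      calc ‖x‖ * q u ≤ ‖x‖ * q b := mul_le_mul_of_nonneg_left h2 hnx.le
        _ ≤ max (q b) 1 * ‖x‖ := by rw [mul_comm]; exact mul_le_mul_of_nonneg_right (le_max_left _ _) hnx.le

lemma distSet_nonempty {n : ℕ} (q r : EuclideanSpace ℝ (Fin n) → ℝ)
    (hq : IsQuasinorm q) (hcq : Continuous q) (hr : IsQuasinorm r) (hcr : Continuous r)
    (x₀ : EuclideanSpace ℝ (Fin n)) (hx₀ : ‖x₀‖ = 1) :
    (distSet q r).Nonempty := by
  obtain ⟨cq, Cq, hcq1, hCq1, hq2⟩ := quasi_equiv_norm q hq hcq x₀ hx₀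
  obtain ⟨cr, Cr, hcr1, hCr1, hr2⟩ := quasi_equiv_norm r hr hcr x₀ hx₀
  refine ⟨max 1 (Cq * Cr / (cq * cr)), le_max_left _ _, Cq / cr, div_pos hCq1 hcr1, fun x => ?_⟩
  obtain ⟨hq3, hq4⟩ := hq2 x
  obtain ⟨hr3, hr4⟩ := hr2 x
  constructor
  · calc q x ≤ Cq * ‖x‖ := hq4
      _ = (Cq / cr) * (cr * ‖x‖) := by field_simp
      _ ≤ (Cq / cr) * r x := mul_le_mul_of_nonneg_left hr3 (div_pos hCq1 hcr1).le
  · calc (Cq / cr) * r x ≤ (Cq / cr) * (Cr * ‖x‖) := mul_le_mul_of_nonneg_left hr4 (div_pos hCq1 hcr1).le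
      _ = (Cq * Cr / (cq * cr)) * (cq * ‖x‖) := by field_simp
      _ ≤ (Cq * Cr / (cq * cr)) * q x := mul_le_mul_of_nonneg_left hq3 (by positivity)
      _ ≤ max 1 (Cq * Cr / (cq * cr)) * q x := mul_le_mul_of_nonneg_right (le_max_right _ _) (hq.1 x)

set_option maxHeartbeats 1000000 in
/-- Completeness: every Cauchy sequence of classes of continuous quasinorms converges. -/
theorem stmt9 {n : ℕ} (Q : ℕ → (EuclideanSpace ℝ (Fin n) → ℝ))
    (hQ : ∀ k, IsQuasinorm (Q k) ∧ Continuous (Q k))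
    (hCauchy : ∀ ε : ℝ, 0 < ε → ∃ N : ℕ, ∀ m ≥ N, ∀ k ≥ N,
      Real.logb 2 (multDist (Q m) (Q k)) < ε) :
    ∃ q : EuclideanSpace ℝ (Fin n) → ℝ, IsQuasinorm q ∧ Continuous q ∧
      ∀ ε : ℝ, 0 < ε → ∃ N : ℕ, ∀ k ≥ N, Real.logb 2 (multDist (Q k) q) < ε := by
  rcases Nat.eq_zero_or_pos n with hn | hn
  · -- trivial case: the space is a singleton
    subst hn
    have hall : ∀ x : EuclideanSpace ℝ (Fin 0), x = 0 := fun x => Subsingleton.elim x 0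
    refine ⟨fun _ => (0:ℝ), ⟨fun _ => le_refl 0, fun x => ⟨fun _ => hall x, fun _ => rfl⟩,
      fun c x => (mul_zero _).symm, 1, one_pos, fun x y => by norm_num⟩, continuous_const, ?_⟩
    intro ε hε
    refine ⟨0, fun k _ => ?_⟩
    have hQk0 : ∀ x, Q k x = 0 := fun x => ((hQ k).1.2.1 x).mpr (hall x)
    have hmem : (1:ℝ) ∈ distSet (Q k) (fun _ => (0:ℝ)) := by
      refine ⟨le_refl 1, 1, one_pos, fun x => ?_⟩
      simp [hQk0 x]
    have h1 : multDist (Q k) (fun _ => (0:ℝ)) = 1 := by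
      refine le_antisymm (csInf_le ⟨1, fun μ hμ => hμ.1⟩ hmem) (le_csInf ⟨1, hmem⟩ (fun μ hμ => hμ.1))
    rw [h1, Real.logb_one]; exact hε
  · -- main case
    set x₀ : EuclideanSpace ℝ (Fin n) := EuclideanSpace.single ⟨0, hn⟩ (1:ℝ) with hx₀def
    have hx₀ : ‖x₀‖ = 1 := by rw [hx₀def, EuclideanSpace.norm_single]; norm_num
    have hx₀ne : x₀ ≠ 0 := by
      intro h; rw [h, norm_zero] at hx₀; norm_num at hx₀
    have hpos : ∀ k x, 0 ≤ Q k x := fun k => (hQ k).1.1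
    have hzero : ∀ k x, Q k x = 0 ↔ x = 0 := fun k => (hQ k).1.2.1
    have hhom : ∀ k (c : ℝ) x, Q k (c • x) = |c| * Q k x := fun k => (hQ k).1.2.2.1
    have hQ0 : ∀ k, 0 < Q k x₀ :=
      fun k => (hpos k x₀).lt_of_ne (fun h => hx₀ne ((hzero k x₀).mp h.symm))
    -- cross-multiplied key inequality
    have key : ∀ ε : ℝ, 1 < ε → ∃ N : ℕ, ∀ m, N ≤ m → ∀ k, N ≤ k → ∀ x,
        Q m x * Q k x₀ ≤ ε * (Q k x * Q m x₀) := by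
      intro ε hε
      have hδ : 0 < Real.logb 2 ε := Real.logb_pos one_lt_two hε
      obtain ⟨N, hN⟩ := hCauchy _ hδ
      refine ⟨N, fun m hm k hk => ?_⟩
      have hne := distSet_nonempty (Q m) (Q k) (hQ m).1 (hQ m).2 (hQ k).1 (hQ k).2 x₀ hx₀
      have hlb : 1 ≤ multDist (Q m) (Q k) := le_csInf hne (fun μ hμ => hμ.1)
      have hlt : multDist (Q m) (Q k) < ε := by
        by_contra hcon
        push_neg at hcon
        have := (Real.logb_le_logb one_lt_two (by linarith) (by linarith)).mpr hcon
        have h2 := hN m hm k hk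
        linarith
      obtain ⟨μ, hμmem, hμlt⟩ := exists_lt_of_csInf_lt hne hlt
      obtain ⟨hμ1, l, hl, hlx⟩ := hμmem
      intro x
      have h1 := (hlx x).1
      have h4 := (hlx x₀).2
      nlinarith [mul_le_mul_of_nonneg_right h1 (hpos k x₀),
        mul_le_mul_of_nonneg_left h4 (hpos k x),
        mul_le_mul_of_nonneg_right hμlt.le (mul_nonneg (hpos k x) (hpos m x₀))]
    -- normalized quasinorms
    set P : ℕ → EuclideanSpace ℝ (Fin n) → ℝ := fun k x => Q k x / Q k x₀ with hP
    have Pnonneg : ∀ k x, 0 ≤ P k x := fun k x => div_nonneg (hpos k x) (hQ0 k).le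
    have Pzero : ∀ k, P k 0 = 0 := fun k => by simp [hP, (hzero k 0).mpr rfl]
    have keyP : ∀ ε : ℝ, 1 < ε → ∃ N : ℕ, ∀ m, N ≤ m → ∀ k, N ≤ k → ∀ x,
        P m x ≤ ε * P k x := by
      intro ε hε
      obtain ⟨N, hN⟩ := key ε hε
      refine ⟨N, fun m hm k hk x => ?_⟩
      have h := hN m hm k hk x
      have goal' : Q m x / Q m x₀ ≤ (ε * Q k x) / Q k x₀ :=
        (div_le_div_iff₀ (hQ0 m) (hQ0 k)).mpr (by nlinarith)
      simpa [hP, mul_div_assoc] using goal'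
    -- Cauchy sequences pointwise
    have hcs : ∀ x, CauchySeq (fun k => P k x) := by
      intro x
      rw [Metric.cauchySeq_iff]
      intro δ hδ
      obtain ⟨N₂, hN₂⟩ := keyP 2 one_lt_two
      set B : ℝ := P N₂ x with hB
      have hBnn : 0 ≤ B := Pnonneg N₂ x
      set e : ℝ := δ / (2 * (2 * B + 1)) with he
      have hepos : 0 < e := div_pos hδ (by positivity)
      have hekey : e * (2 * (2 * B + 1)) = δ := div_mul_cancel₀ _ (by positivity)
      obtain ⟨N₃, hN₃⟩ := keyP (1 + e) (by linarith)
      refine ⟨max N₂ N₃, fun m hm k hk => ?_⟩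
      have hbm : P m x ≤ 2 * B := by
        simpa [hB] using hN₂ m (le_trans (le_max_left _ _) hm) N₂ le_rfl x
      have hbk : P k x ≤ 2 * B := by
        simpa [hB] using hN₂ k (le_trans (le_max_left _ _) hk) N₂ le_rfl x
      have h1 := hN₃ m (le_trans (le_max_right _ _) hm) k (le_trans (le_max_right _ _) hk) x
      have h2 := hN₃ k (le_trans (le_max_right _ _) hk) m (le_trans (le_max_right _ _) hm) x
      rw [Real.dist_eq, abs_lt]
      constructor
      · nlinarith [Pnonneg m x, Pnonneg k x, mul_le_mul_of_nonneg_left hbm hepos.le]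
      · nlinarith [Pnonneg m x, Pnonneg k x, mul_le_mul_of_nonneg_left hbk hepos.le]
    have hlim : ∀ x, ∃ L, Filter.Tendsto (fun k => P k x) Filter.atTop (nhds L) :=
      fun x => cauchySeq_tendsto_of_complete (hcs x)
    choose q hq' using hlim
    -- two-sided approximation of the limit
    have keyQ : ∀ ε : ℝ, 1 < ε → ∃ N : ℕ, ∀ k, N ≤ k → ∀ x,
        P k x ≤ ε * q x ∧ q x ≤ ε * P k x := by
      intro ε hε
      obtain ⟨N, hN⟩ := keyP ε hε
      refine ⟨N, fun k hk x => ⟨?_, ?_⟩⟩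
      · exact ge_of_tendsto ((hq' x).const_mul ε)
          (Filter.eventually_atTop.mpr ⟨N, fun m hm => hN k hk m hm x⟩)
      · exact le_of_tendsto (hq' x)
          (Filter.eventually_atTop.mpr ⟨N, fun m hm => hN m hm k hk x⟩)
    have qnonneg : ∀ x, 0 ≤ q x := fun x =>
      ge_of_tendsto (hq' x) (Filter.Eventually.of_forall (fun k => Pnonneg k x))
    have qzero : ∀ x, q x = 0 ↔ x = 0 := by
      intro x
      constructor
      · intro h
        by_contra hx
        obtain ⟨N, hN⟩ := keyQ 2 one_lt_two
        have hPN : 0 < P N x :=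
          div_pos ((hpos N x).lt_of_ne (fun h' => hx ((hzero N x).mp h'.symm))) (hQ0 N)
        have := (hN N le_rfl x).1
        rw [h] at this
        linarith
      · rintro rfl
        refine tendsto_nhds_unique (hq' 0) ?_
        simpa [Pzero] using (tendsto_const_nhds : Filter.Tendsto (fun _ : ℕ => (0:ℝ)) Filter.atTop (nhds 0))
    have qhom : ∀ (c : ℝ) x, q (c • x) = |c| * q x := by
      intro c x
      refine tendsto_nhds_unique (hq' (c • x)) ?_
      have : ∀ k, P k (c • x) = |c| * P k x := fun k => by
        simp [hP, hhom k c x, mul_div_assoc]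
      simpa [this] using (hq' x).const_mul |c|
    -- triangle inequality with constant
    obtain ⟨N₁, hN₁⟩ := keyQ 2 one_lt_two
    obtain ⟨K, hK, htri⟩ := (hQ N₁).1.2.2.2
    have qtri : ∀ x y, q (x + y) ≤ (4 * K) * (q x + q y) := by
      intro x y
      have h1 := (hN₁ N₁ le_rfl (x + y)).2
      have h2 := (hN₁ N₁ le_rfl x).1
      have h3 := (hN₁ N₁ le_rfl y).1
      have h4 : P N₁ (x + y) ≤ K * (P N₁ x + P N₁ y) := by
        have h := htri x y
        have : Q N₁ (x+y) / Q N₁ x₀ ≤ (K * (Q N₁ x + Q N₁ y)) / Q N₁ x₀ :=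
          (div_le_div_iff_of_pos_right (hQ0 N₁)).mpr h
        calc P N₁ (x+y) = Q N₁ (x+y) / Q N₁ x₀ := rfl
          _ ≤ (K * (Q N₁ x + Q N₁ y)) / Q N₁ x₀ := this
          _ = K * (P N₁ x + P N₁ y) := by simp [hP]; ring
      nlinarith [qnonneg x, qnonneg y, Pnonneg N₁ x, Pnonneg N₁ y,
        mul_le_mul_of_nonneg_left h2 hK.le, mul_le_mul_of_nonneg_left h3 hK.le]
    -- global upper bound for q by the norm
    obtain ⟨c₂, C₂, hc₂, hC₂, hb₂⟩ := quasi_equiv_norm (Q N₁) (hQ N₁).1 (hQ N₁).2 x₀ hx₀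
    set D : ℝ := max 1 (2 * C₂ / Q N₁ x₀) with hD
    have hD1 : (1:ℝ) ≤ D := le_max_left _ _
    have hDpos : (0:ℝ) < D := lt_of_lt_of_le one_pos hD1
    have hqle : ∀ x, q x ≤ D * ‖x‖ := by
      intro x
      have h1 := (hN₁ N₁ le_rfl x).2
      have h2 : P N₁ x ≤ (C₂ / Q N₁ x₀) * ‖x‖ := by
        rw [hP]
        rw [div_mul_eq_mul_div, div_le_div_iff₀ (hQ0 N₁) (hQ0 N₁)]
        nlinarith [(hb₂ x).2, hQ0 N₁, norm_nonneg x]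
      have h3 : (2 * C₂ / Q N₁ x₀) ≤ D := le_max_right _ _
      calc q x ≤ 2 * P N₁ x := h1
        _ ≤ 2 * ((C₂ / Q N₁ x₀) * ‖x‖) := by linarith
        _ = (2 * C₂ / Q N₁ x₀) * ‖x‖ := by ring
        _ ≤ D * ‖x‖ := mul_le_mul_of_nonneg_right h3 (norm_nonneg x)
    -- continuity
    have hcont : Continuous q := by
      rw [continuous_iff_continuousAt]
      intro a
      rw [Metric.continuousAt_iff]
      intro δ₀ hδ₀
      set δ : ℝ := min δ₀ 1 with hδdef
      have hδ : 0 < δ := lt_min hδ₀ one_pos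
      have hδ1 : δ ≤ 1 := min_le_right _ _
      set e : ℝ := δ / (12 * D * (‖a‖ + 1)) with hedef
      have hepos : 0 < e := div_pos hδ (by positivity)
      have hekey : e * (12 * D * (‖a‖ + 1)) = δ := div_mul_cancel₀ _ (by positivity)
      have he1 : e ≤ 1 := by
        rw [hedef, div_le_one (by positivity)]
        nlinarith [norm_nonneg a]
      obtain ⟨N, hN⟩ := keyQ (1 + e) (by linarith)
      have hPc : Continuous (P N) := (hQ N).2.div_const _
      obtain ⟨r₁, hr₁, hr₁'⟩ := Metric.continuousAt_iff.mp hPc.continuousAt (δ/3) (by linarith)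
      refine ⟨min r₁ 1, lt_min hr₁ one_pos, fun x hx => ?_⟩
      have hxa : dist x a < r₁ := lt_of_lt_of_le hx (min_le_left _ _)
      have hxn : ‖x‖ ≤ ‖a‖ + 1 := by
        have h1 : dist x a < 1 := lt_of_lt_of_le hx (min_le_right _ _)
        have h2 := norm_sub_norm_le x a
        rw [← dist_eq_norm] at h2
        linarith
      have hPdist := hr₁' hxa
      rw [Real.dist_eq] at hPdist
      obtain ⟨hPd1, hPd2⟩ := abs_lt.mp hPdist
      have h1a := (hN N le_rfl x).1
      have h1b := (hN N le_rfl x).2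
      have h2a := (hN N le_rfl a).1
      have h2b := (hN N le_rfl a).2
      have hqxb : q x ≤ D * (‖a‖ + 1) :=
        le_trans (hqle x) (mul_le_mul_of_nonneg_left hxn hDpos.le)
      have hqab : q a ≤ D * (‖a‖ + 1) :=
        le_trans (hqle a) (mul_le_mul_of_nonneg_left (by linarith [norm_nonneg a] : ‖a‖ ≤ ‖a‖ + 1) hDpos.le)
      rw [add_mul, one_mul] at h1a h1b h2a h2b
      have hex : e * q x ≤ e * (D * (‖a‖ + 1)) := mul_le_mul_of_nonneg_left hqxb hepos.le
      have hea : e * q a ≤ e * (D * (‖a‖ + 1)) := mul_le_mul_of_nonneg_left hqab hepos.le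
      have heD : e * (D * (‖a‖ + 1)) ≤ 1 * (D * (‖a‖ + 1)) :=
        mul_le_mul_of_nonneg_right he1 (by positivity)
      have hPxb : P N x ≤ 2 * (D * (‖a‖ + 1)) := by linarith
      have hPab : P N a ≤ 2 * (D * (‖a‖ + 1)) := by linarith
      have hePx : e * P N x ≤ e * (2 * (D * (‖a‖ + 1))) := mul_le_mul_of_nonneg_left hPxb hepos.le
      have hePa : e * P N a ≤ e * (2 * (D * (‖a‖ + 1))) := mul_le_mul_of_nonneg_left hPab hepos.le
      have habs : |q x - q a| < δ := by
        rw [abs_lt]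
        constructor
        · linarith
        · linarith
      rw [Real.dist_eq]
      exact lt_of_lt_of_le habs (min_le_left _ _)
    refine ⟨q, ⟨qnonneg, qzero, qhom, 4 * K, by linarith, qtri⟩, hcont, ?_⟩
    -- convergence
    intro ε hε
    set ε' : ℝ := (2:ℝ) ^ (ε/3) with hε'def
    have hε' : 1 < ε' := by
      rw [hε'def]
      exact (Real.one_lt_rpow_iff_of_pos two_pos).mpr (Or.inl ⟨one_lt_two, by linarith⟩)
    have hε'pos : 0 < ε' := lt_trans one_pos hε'
    obtain ⟨N, hN⟩ := keyQ ε' hε'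
    refine ⟨N, fun k hk => ?_⟩
    have hPk : ∀ x, P k x * Q k x₀ = Q k x := fun x => div_mul_cancel₀ _ (hQ0 k).ne'
    have hmem : ε' * ε' ∈ distSet (Q k) q := by
      refine ⟨by nlinarith, ε' * Q k x₀, mul_pos hε'pos (hQ0 k), fun x => ?_⟩
      obtain ⟨h1, h2⟩ := hN k hk x
      have hq1 : Q k x ≤ ε' * q x * Q k x₀ := by
        rw [← hPk x]
        exact mul_le_mul_of_nonneg_right h1 (hQ0 k).le
      have hq2 : q x * Q k x₀ ≤ ε' * Q k x := by
        have h := mul_le_mul_of_nonneg_right h2 (hQ0 k).le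
        rwa [mul_assoc, hPk x] at h
      constructor
      · nlinarith [hq1]
      · nlinarith [mul_le_mul_of_nonneg_left hq2 hε'pos.le]
    have hdle : multDist (Q k) q ≤ ε' * ε' := csInf_le ⟨1, fun μ hμ => hμ.1⟩ hmem
    have hdge : 1 ≤ multDist (Q k) q := le_csInf ⟨_, hmem⟩ (fun μ hμ => hμ.1)
    have h2 : Real.logb 2 (multDist (Q k) q) ≤ Real.logb 2 (ε' * ε') :=
      (Real.logb_le_logb one_lt_two (by linarith) (by positivity)).mpr hdle
    have h3 : Real.logb 2 (ε' * ε') = ε/3 + ε/3 := by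
      rw [hε'def, ← Real.rpow_add two_pos, Real.logb_rpow two_pos (by norm_num)]
    rw [h3] at h2
    linarith
end

section
/- Let $\|\cdot\|_X$ be a norm on $\mathbb{R}^n$ whose group of linear autoisometries is not $\{\operatorname{Id},-\operatorname{Id}\}$. Then there exists a linear isometry $F:(\mathbb{R}^n,\|\cdot\|_X)\to(\mathbb{R}^n,\|\cdot\|_X)$ with $\min\{\|F+\operatorname{Id}\|_X,\|F-\operatorname{Id}\|_X\}\geq 1$, where $\|\cdot\|_X$ here denotes the operator norm induced by the norm. -/
/-!
Let `G` be an isometry of `q`. A complex eigenvector `z` of `G` spans the real plane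
`ζ ↦ Re (ζ • z)`, on which `G` acts as multiplication by the eigenvalue `μ`; since `q` is
comparable to `|ζ|` on that plane and `G` preserves `q`, `|μ| = 1`. If `μ` is not real, some
power `ν = μ ^ k` has `|Re ν| ≤ 1 / 2`, hence `|ν ± 1| ≥ 1`, and `G ^ k ± 1` act on the plane as
multiplication by `ν ± 1`; a map with such a non-decaying orbit has operator norm at least `1`.
If all eigenvalues of `G` are real, they are `±1`, so `G ^ 2 - 1` is nilpotent; an isometry has no
Jordan blocks, hence `G ^ 2 = 1`, and `G ± 1` have eigenvectors with eigenvalues `±2`.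
-/

open scoped Real

open scoped Matrix

/-- The operator norm of `T` for the norm `q`; a junk value unless `T` is bounded for `q`. -/
noncomputable def opNormFn {E : Type*} [AddCommGroup E] [Module ℝ E] (q : E → ℝ)
    (T : E →ₗ[ℝ] E) : ℝ :=
  sSup ((fun x => q (T x)) '' {x | q x ≤ 1})

lemma Module.End.eq_zero_of_isNilpotent {R M : Type*} [Semiring R] [AddCommMonoid M] [Module R M]
    {N : Module.End R M} (hN : IsNilpotent N) (h : ∀ y, N (N y) = 0 → N y = 0) : N = 0 := by
  obtain ⟨k, hk⟩ := hN
  suffices ∀ k x, (N ^ k) x = 0 → N x = 0 from LinearMap.ext fun x => this k x (by simp [hk])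
  intro k
  induction k with
  | zero => intro x hx; simp_all
  | succ k ih => intro x hx; exact h x (ih (N x) (by rwa [pow_succ, Module.End.mul_apply] at hx))

lemma pow_apply_eq_of_isometry {E : Type*} [AddCommGroup E] [Module ℝ E] {q : E → ℝ}
    {F : E →ₗ[ℝ] E} (hF : ∀ x, q (F x) = q x) (m : ℕ) (x : E) : q ((F ^ m) x) = q x := by
  induction m with
  | zero => rfl
  | succ m ih => rw [pow_succ', Module.End.mul_apply, hF, ih]

lemma Function.Semiconj.pow_mul_left {R M E : Type*} [Monoid M] [Semiring R] [AddCommMonoid E]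
    [Module R E] {Φ : M → E} {κ : M} {T : E →ₗ[R] E} (h : Function.Semiconj Φ (κ * ·) T)
    (m : ℕ) : Function.Semiconj Φ (κ ^ m * ·) ⇑(T ^ m) := by
  rw [Module.End.coe_pow, ← mul_left_iterate]
  exact h.iterate_right m

namespace IsNormFn

variable {E : Type*} [AddCommGroup E] [Module ℝ E] {q : E → ℝ}

lemma nonneg (hq : IsNormFn q) (x : E) : 0 ≤ q x := hq.1 x

lemma eq_zero_iff (hq : IsNormFn q) {x : E} : q x = 0 ↔ x = 0 := hq.2.1 x

lemma map_smul (hq : IsNormFn q) (c : ℝ) (x : E) : q (c • x) = |c| * q x := hq.2.2.1 c x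

lemma add_le (hq : IsNormFn q) (x y : E) : q (x + y) ≤ q x + q y := hq.2.2.2 x y

lemma map_zero (hq : IsNormFn q) : q 0 = 0 := hq.eq_zero_iff.mpr rfl

lemma pos (hq : IsNormFn q) {x : E} (hx : x ≠ 0) : 0 < q x :=
  (hq.nonneg x).lt_of_ne' (mt hq.eq_zero_iff.mp hx)

lemma map_neg (hq : IsNormFn q) (x : E) : q (-x) = q x := by
  simpa using hq.map_smul (-1) x

lemma sub_le (hq : IsNormFn q) (x y : E) : q (x - y) ≤ q x + q y := by
  simpa [sub_eq_add_neg, hq.map_neg] using hq.add_le x (-y)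

lemma comp {V : Type*} [AddCommGroup V] [Module ℝ V] (hq : IsNormFn q) {Φ : V →ₗ[ℝ] E}
    (hΦ : Function.Injective Φ) : IsNormFn (q ∘ Φ) :=
  ⟨fun _ => hq.nonneg _, fun _ => by simp [hq.eq_zero_iff, hΦ.eq_iff' Φ.map_zero],
    fun c v => by simp [hq.map_smul], fun v w => by simpa using hq.add_le _ _⟩

lemma convexOn (hq : IsNormFn q) : ConvexOn ℝ Set.univ q :=
  ⟨convex_univ, fun x _ y _ a b ha hb _ => by
    simpa [hq.map_smul, abs_of_nonneg ha, abs_of_nonneg hb] using hq.add_le (a • x) (b • y)⟩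

lemma exists_mul_norm_le_and_le_mul_norm {V : Type*} [NormedAddCommGroup V] [NormedSpace ℝ V]
    [FiniteDimensional ℝ V] {p : V → ℝ} (hp : IsNormFn p) :
    ∃ c C : ℝ, 0 < c ∧ ∀ v, c * ‖v‖ ≤ p v ∧ p v ≤ C * ‖v‖ := by
  cases subsingleton_or_nontrivial V with
  | inl _ => exact ⟨1, 0, one_pos, fun v => by simp [Subsingleton.elim v 0, hp.map_zero]⟩
  | inr _ =>
    have hcont : ContinuousOn p (Metric.sphere 0 1) :=
      (hp.convexOn.continuousOn isOpen_univ).mono (Set.subset_univ _)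
    have hne : (Metric.sphere (0 : V) 1).Nonempty := NormedSpace.sphere_nonempty.mpr zero_le_one
    obtain ⟨v₀, hv₀, hmin⟩ := (isCompact_sphere (0 : V) 1).exists_isMinOn hne hcont
    obtain ⟨v₁, -, hmax⟩ := (isCompact_sphere (0 : V) 1).exists_isMaxOn hne hcont
    refine ⟨p v₀, p v₁, hp.pos (ne_zero_of_mem_unit_sphere ⟨v₀, hv₀⟩), fun v => ?_⟩
    rcases eq_or_ne v 0 with rfl | hv
    · simp [hp.map_zero]
    have hnv : 0 < ‖v‖ := norm_pos_iff.mpr hv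
    have hunit : ‖v‖⁻¹ • v ∈ Metric.sphere (0 : V) 1 := by
      simp [norm_smul, hnv.ne']
    have hscale : p v = ‖v‖ * p (‖v‖⁻¹ • v) := by
      rw [hp.map_smul, abs_of_pos (inv_pos.mpr hnv), ← mul_assoc, mul_inv_cancel₀ hnv.ne', one_mul]
    rw [hscale, mul_comm (p v₀), mul_comm (p v₁)]
    exact ⟨mul_le_mul_of_nonneg_left (hmin hunit) hnv.le,
      mul_le_mul_of_nonneg_left (hmax hunit) hnv.le⟩

lemma bddAbove_image (hq : IsNormFn q) {T : E →ₗ[ℝ] E} {C : ℝ} (hT : ∀ x, q (T x) ≤ C * q x) :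
    BddAbove ((fun x => q (T x)) '' {x | q x ≤ 1}) := by
  refine ⟨|C|, ?_⟩
  rintro _ ⟨x, hx, rfl⟩
  calc q (T x) ≤ C * q x := hT x
    _ ≤ |C| * 1 := mul_le_mul (le_abs_self C) hx (hq.nonneg x) (abs_nonneg C)
    _ = |C| := mul_one _

lemma opNormFn_nonneg (hq : IsNormFn q) {T : E →ₗ[ℝ] E} {C : ℝ}
    (hT : ∀ x, q (T x) ≤ C * q x) : 0 ≤ opNormFn q T :=
  le_csSup_of_le (hq.bddAbove_image hT) ⟨0, by simp [hq.map_zero], rfl⟩ (hq.nonneg _)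

lemma apply_le_opNormFn_mul (hq : IsNormFn q) {T : E →ₗ[ℝ] E} {C : ℝ}
    (hT : ∀ x, q (T x) ≤ C * q x) (x : E) : q (T x) ≤ opNormFn q T * q x := by
  rcases eq_or_ne x 0 with rfl | hx
  · simp [hq.map_zero]
  have hqx := hq.pos hx
  have hunit : q ((q x)⁻¹ • x) ≤ 1 := by
    rw [hq.map_smul, abs_of_pos (inv_pos.mpr hqx), inv_mul_cancel₀ hqx.ne']
  have : q (T ((q x)⁻¹ • x)) ≤ opNormFn q T := le_csSup (hq.bddAbove_image hT) ⟨_, hunit, rfl⟩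
  rwa [LinearMap.map_smul, hq.map_smul, abs_of_pos (inv_pos.mpr hqx), inv_mul_le_iff₀ hqx,
    mul_comm] at this

lemma pow_apply_le_opNormFn_pow_mul (hq : IsNormFn q) {T : E →ₗ[ℝ] E} {C : ℝ}
    (hT : ∀ x, q (T x) ≤ C * q x) (m : ℕ) (x : E) :
    q ((T ^ m) x) ≤ opNormFn q T ^ m * q x := by
  induction m with
  | zero => simp
  | succ m ih =>
    rw [pow_succ', Module.End.mul_apply, pow_succ', mul_assoc]
    exact (hq.apply_le_opNormFn_mul hT _).trans
      (mul_le_mul_of_nonneg_left ih (hq.opNormFn_nonneg hT))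

/-- The orbit `(T ^ m) (Φ 1) = Φ (κ ^ m)` does not decay, as it would if `opNormFn q T < 1`. -/
lemma one_le_opNormFn_of_semiconj {𝕜 : Type*} [RCLike 𝕜] (hq : IsNormFn q) {T : E →ₗ[ℝ] E}
    {C : ℝ} (hT : ∀ x, q (T x) ≤ C * q x) {Φ : 𝕜 →ₗ[ℝ] E} (hΦ : Function.Injective Φ) {κ : 𝕜}
    (hκ : 1 ≤ ‖κ‖) (h : Function.Semiconj Φ (κ * ·) T) : 1 ≤ opNormFn q T := by
  obtain ⟨c, _, hc, hbound⟩ := (hq.comp hΦ).exists_mul_norm_le_and_le_mul_norm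
  have horbit (m : ℕ) : c ≤ opNormFn q T ^ m * q (Φ 1) := by
    have hpow : (T ^ m) (Φ 1) = Φ (κ ^ m) := by simpa using (h.pow_mul_left m 1).symm
    calc c ≤ c * ‖κ ^ m‖ := le_mul_of_one_le_right hc.le (by rw [norm_pow]; exact one_le_pow₀ hκ)
      _ ≤ q (Φ (κ ^ m)) := (hbound _).1
      _ ≤ _ := hpow ▸ hq.pow_apply_le_opNormFn_pow_mul hT m _
  by_contra! hlt
  have hΦ1 : 0 < q (Φ 1) := hq.pos ((map_ne_zero_iff Φ hΦ).mpr one_ne_zero)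
  obtain ⟨m, hm⟩ := exists_pow_lt_of_lt_one (div_pos hc hΦ1) hlt
  rw [lt_div_iff₀ hΦ1] at hm
  linarith [horbit m]

lemma one_le_opNormFn_of_apply_eq_smul (hq : IsNormFn q) {T : E →ₗ[ℝ] E} {C : ℝ}
    (hT : ∀ x, q (T x) ≤ C * q x) {v : E} (hv : v ≠ 0) {t : ℝ} (ht : 1 ≤ |t|)
    (h : T v = t • v) : 1 ≤ opNormFn q T :=
  hq.one_le_opNormFn_of_semiconj (Φ := LinearMap.toSpanSingleton ℝ E v) hT
    (smul_left_injective ℝ hv) ht fun r => by simp [h, smul_smul, mul_comm]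

lemma isometry_add_id_le (hq : IsNormFn q) {F : E →ₗ[ℝ] E} (hF : ∀ x, q (F x) = q x) (x : E) :
    q ((F + LinearMap.id : E →ₗ[ℝ] E) x) ≤ 2 * q x := by
  simpa [hF, two_mul] using hq.add_le (F x) x

lemma isometry_sub_id_le (hq : IsNormFn q) {F : E →ₗ[ℝ] E} (hF : ∀ x, q (F x) = q x) (x : E) :
    q ((F - LinearMap.id : E →ₗ[ℝ] E) x) ≤ 2 * q x := by
  simpa [hF, two_mul] using hq.sub_le (F x) x

/-- An isometry has no Jordan block of size `2` at the eigenvalue `1`: otherwise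
`S ^ m y = y + m • (S - 1) y` would grow linearly in `m`. -/
lemma sub_one_apply_eq_zero_of_isometry (hq : IsNormFn q) {S : E →ₗ[ℝ] E}
    (hS : ∀ x, q (S x) = q x) {y : E} (hy : (S - 1) ((S - 1) y) = 0) : (S - 1) y = 0 := by
  set N := S - 1
  have hSN : S (N y) = N y := by simpa [N, sub_eq_zero] using hy
  have hpow (m : ℕ) : (S ^ m) y = y + (m : ℝ) • N y := by
    induction m with
    | zero => simp
    | succ m ih =>
      rw [pow_succ', Module.End.mul_apply, ih, map_add, LinearMap.map_smul, hSN,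
        show S y = y + N y by simp [N]]
      push_cast
      module
  have hlin (m : ℕ) : (m : ℝ) * q (N y) ≤ 2 * q y := by
    have := hq.sub_le ((S ^ m) y) y
    rw [pow_apply_eq_of_isometry hS, hpow, add_sub_cancel_left, hq.map_smul, Nat.abs_cast] at this
    linarith
  by_contra hne
  obtain ⟨m, hm⟩ := exists_nat_gt (2 * q y / q (N y))
  rw [div_lt_iff₀ (hq.pos hne)] at hm
  linarith [hlin m]

lemma eq_one_of_isNilpotent_sub_one (hq : IsNormFn q) {S : E →ₗ[ℝ] E}
    (hS : ∀ x, q (S x) = q x) (h : IsNilpotent (S - 1)) : S = 1 :=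
  sub_eq_zero.mp (Module.End.eq_zero_of_isNilpotent h
    fun _ hy => hq.sub_one_apply_eq_zero_of_isometry hS hy)

lemma eq_one_or_eq_neg_one_of_hasEigenvalue (hq : IsNormFn q) {G : E →ₗ[ℝ] E}
    (hG : ∀ x, q (G x) = q x) {t : ℝ} (ht : Module.End.HasEigenvalue G t) : t = 1 ∨ t = -1 := by
  obtain ⟨v, hv⟩ := ht.exists_hasEigenvector
  have h := hG v
  rw [hv.apply_eq_smul, hq.map_smul] at h
  exact abs_eq zero_le_one |>.mp ((mul_eq_right₀ (hq.pos hv.2).ne').mp h)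

open Polynomial in
lemma sq_eq_one_of_forall_roots_im_eq_zero [FiniteDimensional ℝ E] (hq : IsNormFn q)
    {G : E →ₗ[ℝ] E} (hG : ∀ x, q (G x) = q x)
    (hreal : ∀ μ ∈ (G.charpoly.map (algebraMap ℝ ℂ)).roots, μ.im = 0) : G ^ 2 = 1 := by
  set P := G.charpoly.map (algebraMap ℝ ℂ)
  have hroot (μ : ℂ) (hμ : μ ∈ P.roots) : μ = 1 ∨ μ = -1 := by
    have hμ' : μ = algebraMap ℝ ℂ μ.re := Complex.ext (by simp) (by simp [hreal μ hμ])
    have h := isRoot_of_mem_roots hμ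
    rw [hμ', IsRoot, eval_map_algebraMap, aeval_algebraMap_apply,
      map_eq_zero_iff _ (algebraMap ℝ ℂ).injective] at h
    rcases hq.eq_one_or_eq_neg_one_of_hasEigenvalue hG
      ((Module.End.hasEigenvalue_iff_isRoot_charpoly G _).mpr h) with h | h <;>
      rw [hμ', h] <;> simp
  have hdvd : G.charpoly ∣ (X ^ 2 - 1) ^ Multiset.card P.roots := by
    rw [← map_dvd_map' (algebraMap ℝ ℂ)]
    calc P = (P.roots.map (fun μ => X - C μ)).prod :=
          (IsAlgClosed.splits P).eq_prod_roots_of_monic (G.charpoly_monic.map _)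
      _ ∣ (P.roots.map (fun _ => X ^ 2 - 1)).prod := by
          refine Multiset.prod_dvd_prod_of_dvd _ _ fun μ hμ => ?_
          rcases hroot μ hμ with rfl | rfl
          · exact ⟨X + 1, by rw [C_1]; ring⟩
          · exact ⟨X - 1, by rw [C_neg, C_1]; ring⟩
      _ = _ := by simp
  have h := aeval_eq_zero_of_dvd_aeval_eq_zero hdvd G.aeval_self_charpoly
  rw [map_pow, map_sub, map_pow, aeval_X, map_one] at h
  exact hq.eq_one_of_isNilpotent_sub_one (pow_apply_eq_of_isometry hG 2) ⟨_, h⟩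

lemma one_le_opNormFn_of_sq_eq_one (hq : IsNormFn q) {G : E →ₗ[ℝ] E} (hG : ∀ x, q (G x) = q x)
    (hsq : G ^ 2 = 1) (h1 : G ≠ LinearMap.id) (h2 : G ≠ -LinearMap.id) :
    1 ≤ opNormFn q (G + LinearMap.id) ∧ 1 ≤ opNormFn q (G - LinearMap.id) := by
  have hGG (x : E) : G (G x) = x := by
    rw [← Module.End.mul_apply, ← sq, hsq, Module.End.one_apply]
  obtain ⟨x, hx⟩ : ∃ x, G x ≠ -x := by
    by_contra! h
    exact h2 (LinearMap.ext fun x => by simp [h])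
  obtain ⟨y, hy⟩ : ∃ y, G y ≠ y := by
    by_contra! h
    exact h1 (LinearMap.ext h)
  constructor
  · refine hq.one_le_opNormFn_of_apply_eq_smul (hq.isometry_add_id_le hG)
      (v := G x + x) (t := 2) (by rwa [Ne, add_eq_zero_iff_eq_neg]) (by norm_num) ?_
    rw [LinearMap.add_apply, LinearMap.id_apply, map_add, hGG]
    module
  · refine hq.one_le_opNormFn_of_apply_eq_smul (hq.isometry_sub_id_le hG)
      (v := G y - y) (t := -2) (sub_ne_zero.mpr hy) (by norm_num) ?_
    rw [LinearMap.sub_apply, LinearMap.id_apply, map_sub, hGG]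
    module

end IsNormFn

lemma exists_nat_mul_mem_Icc {a θ : ℝ} (h0 : 0 < θ) (hθ : θ ≤ a) :
    ∃ k : ℕ, a ≤ k * θ ∧ k * θ ≤ 2 * a := by
  refine ⟨⌈a / θ⌉₊, (div_le_iff₀ h0).mp (Nat.le_ceil _), ?_⟩
  have := mul_lt_mul_of_pos_right (Nat.ceil_lt_add_one (div_nonneg (h0.le.trans hθ) h0.le)) h0
  rw [add_mul, div_mul_cancel₀ _ h0.ne', one_mul] at this
  linarith

namespace Real

lemma abs_cos_le_half {x : ℝ} (h₁ : π / 3 ≤ x) (h₂ : x ≤ 2 * (π / 3)) : |cos x| ≤ 1 / 2 := by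
  have hπ := pi_pos
  have hlow := cos_le_cos_of_nonneg_of_le_pi (by positivity) (by linarith) h₁
  have hhigh := cos_le_cos_of_nonneg_of_le_pi (x := π / 3) (y := π - x) (by positivity)
    (by linarith) (by linarith)
  rw [cos_pi_sub] at hhigh
  rw [cos_pi_div_three] at hlow hhigh
  exact abs_le.mpr ⟨by linarith, hlow⟩

lemma exists_nat_abs_cos_mul_le_half {θ : ℝ} (h0 : 0 < θ) (hθ : θ < π) :
    ∃ k : ℕ, |cos (k * θ)| ≤ 1 / 2 := by
  rcases le_or_gt θ (π / 3) with hsmall | hθ₁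
  · obtain ⟨k, hk₁, hk₂⟩ := exists_nat_mul_mem_Icc h0 hsmall
    exact ⟨k, abs_cos_le_half hk₁ hk₂⟩
  rcases le_or_gt θ (2 * (π / 3)) with hmid | hlarge
  · exact ⟨1, by simpa using abs_cos_le_half hθ₁.le hmid⟩
  · obtain ⟨k, hk₁, hk₂⟩ :=
      exists_nat_mul_mem_Icc (a := π / 3) (θ := π - θ) (by linarith) (by linarith)
    refine ⟨k, ?_⟩
    have := abs_cos_le_half hk₁ hk₂
    rwa [mul_sub, cos_nat_mul_pi_sub, abs_mul, abs_pow, abs_neg, abs_one, one_pow, one_mul] at this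

end Real

namespace Complex

lemma exists_abs_re_pow_le_half {μ : ℂ} (hμ : ‖μ‖ = 1) (him : μ.im ≠ 0) :
    ∃ k : ℕ, |(μ ^ k).re| ≤ 1 / 2 := by
  have harg₀ : arg μ ≠ 0 := fun h => him (arg_eq_zero_iff.mp h).2
  have hargπ : |arg μ| ≠ Real.pi := fun h => him <| by
    rcases abs_eq Real.pi_pos.le |>.mp h with h | h
    · exact (arg_eq_pi_iff.mp h).2
    · exact absurd h (neg_pi_lt_arg μ).ne'
  obtain ⟨k, hk⟩ := Real.exists_nat_abs_cos_mul_le_half (abs_pos.mpr harg₀)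
    ((abs_arg_le_pi μ).lt_of_ne hargπ)
  refine ⟨k, ?_⟩
  have hpow : μ ^ k = exp ((k * arg μ : ℝ) * I) := by
    conv_lhs => rw [← norm_mul_exp_arg_mul_I μ, hμ, ofReal_one, one_mul, ← exp_nat_mul]
    push_cast
    ring_nf
  rwa [hpow, exp_ofReal_mul_I_re, ← Real.cos_abs, abs_mul, Nat.abs_cast]

lemma one_le_norm_sub_one_and_norm_add_one {ν : ℂ} (hν : ‖ν‖ = 1) (hre : |ν.re| ≤ 1 / 2) :
    1 ≤ ‖ν - 1‖ ∧ 1 ≤ ‖ν + 1‖ := by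
  have h1 : ν.re * ν.re + ν.im * ν.im = 1 := by
    rw [← normSq_apply, normSq_eq_norm_sq, hν, one_pow]
  have hre' := abs_le.mp hre
  constructor <;>
  · rw [← one_le_sq_iff₀ (norm_nonneg _), Complex.sq_norm, normSq_apply]
    simp only [sub_re, add_re, sub_im, add_im, one_re, one_im]
    nlinarith

end Complex

lemma Matrix.re_map_ofReal_mulVec {m n : Type*} [Fintype n] (B : Matrix m n ℝ) (w : n → ℂ)
    (i : m) : ((B.map (algebraMap ℝ ℂ) *ᵥ w) i).re = (B *ᵥ fun j => (w j).re) i := by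
  simp [Matrix.mulVec, dotProduct, Complex.re_sum]

lemma Matrix.exists_mulVec_eq_smul_of_isRoot {n K : Type*} [Fintype n] [DecidableEq n] [Field K]
    (M : Matrix n n K) {t : K} (ht : M.charpoly.IsRoot t) : ∃ z ≠ 0, M *ᵥ z = t • z := by
  rw [← Matrix.charpoly_toLin', ← Module.End.hasEigenvalue_iff_isRoot_charpoly] at ht
  obtain ⟨z, hz⟩ := ht.exists_hasEigenvector
  exact ⟨z, hz.2, by rw [← Matrix.toLin'_apply, hz.apply_eq_smul]⟩

section rePart

variable {E ι : Type*} [AddCommGroup E] [Module ℝ E] [Fintype ι]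

/-- Parametrises by `ℂ` the real plane spanned by the real and imaginary parts of the coordinate
vector `z`. -/
noncomputable def rePart (b : Module.Basis ι ℝ E) (z : ι → ℂ) : ℂ →ₗ[ℝ] E where
  toFun ζ := b.equivFun.symm fun i => (ζ * z i).re
  map_add' ζ ω := by rw [← map_add]; congr 1; ext i; simp [add_mul]
  map_smul' r ζ := by
    rw [← LinearEquiv.map_smul]
    congr 1
    ext i
    simp only [Complex.real_smul, mul_assoc, Complex.re_ofReal_mul, RingHom.id_apply, Pi.smul_apply,
      smul_eq_mul]

lemma equivFun_rePart (b : Module.Basis ι ℝ E) (z : ι → ℂ) (ζ : ℂ) :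
    b.equivFun (rePart b z ζ) = fun i => (ζ * z i).re :=
  b.equivFun.apply_symm_apply _

lemma semiconj_rePart [DecidableEq ι] (b : Module.Basis ι ℝ E) {G : E →ₗ[ℝ] E} {z : ι → ℂ}
    {μ : ℂ} (hz : (LinearMap.toMatrix b b G).map (algebraMap ℝ ℂ) *ᵥ z = μ • z) :
    Function.Semiconj (rePart b z) (μ * ·) G := by
  intro ζ
  apply b.equivFun.injective
  ext i
  rw [equivFun_rePart, Module.Basis.equivFun_apply, ← LinearMap.toMatrix_mulVec_repr b b,
    ← Module.Basis.equivFun_apply, equivFun_rePart]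
  have h : ((LinearMap.toMatrix b b G).map (algebraMap ℝ ℂ) *ᵥ (ζ • z)) i = μ * ζ * z i := by
    rw [Matrix.mulVec_smul, hz, smul_smul, Pi.smul_apply, smul_eq_mul, mul_comm ζ]
  simp only [← h, Matrix.re_map_ofReal_mulVec]
  rfl

/-- The kernel is stable under multiplication by `μ`, and `Re (ζ * z i) = Re (μ * ζ * z i) = 0`
forces `ζ * z i = 0` when `μ` is not real. -/
lemma rePart_injective (b : Module.Basis ι ℝ E) {G : E →ₗ[ℝ] E} {z : ι → ℂ} (hz : z ≠ 0)
    {μ : ℂ} (hμ : μ.im ≠ 0) (h : Function.Semiconj (rePart b z) (μ * ·) G) :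
    Function.Injective (rePart b z) := by
  refine (injective_iff_map_eq_zero _).mpr fun ζ hζ => ?_
  obtain ⟨i, hi⟩ := Function.ne_iff.mp hz
  have hre (ω : ℂ) (hω : rePart b z ω = 0) : (ω * z i).re = 0 := by
    simpa [hω] using (congrFun (equivFun_rePart b z ω) i).symm
  have h₁ := hre ζ hζ
  have h₂ := hre (μ * ζ) (by rw [h ζ, hζ, map_zero])
  rw [mul_assoc, Complex.mul_re, h₁, mul_zero, zero_sub, neg_eq_zero, mul_eq_zero] at h₂
  have : ζ * z i = 0 := Complex.ext h₁ (h₂.resolve_left hμ)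
  exact (mul_eq_zero.mp this).resolve_right hi

end rePart

lemma eq_one_of_forall_pow_mem_Icc {r a b : ℝ} (ha : 0 < a) (h : ∀ m : ℕ, r ^ m ∈ Set.Icc a b) :
    r = 1 := by
  by_contra hne
  rcases lt_or_gt_of_ne hne with hlt | hgt
  · obtain ⟨m, hm⟩ := exists_pow_lt_of_lt_one ha hlt
    exact (h m).1.not_gt hm
  · obtain ⟨m, hm⟩ := pow_unbounded_of_one_lt b hgt
    exact (h m).2.not_gt hm

namespace IsNormFn

variable {E : Type*} [AddCommGroup E] [Module ℝ E] {q : E → ℝ}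

lemma norm_eq_one_of_semiconj {𝕜 : Type*} [RCLike 𝕜] (hq : IsNormFn q) {G : E →ₗ[ℝ] E}
    (hG : ∀ x, q (G x) = q x) {Φ : 𝕜 →ₗ[ℝ] E} (hΦ : Function.Injective Φ) {μ : 𝕜}
    (h : Function.Semiconj Φ (μ * ·) G) : ‖μ‖ = 1 := by
  obtain ⟨c, C, hc, hbound⟩ := (hq.comp hΦ).exists_mul_norm_le_and_le_mul_norm
  have hΦ1 : 0 < q (Φ 1) := hq.pos ((map_ne_zero_iff Φ hΦ).mpr one_ne_zero)
  have horbit (m : ℕ) : q (Φ (μ ^ m)) = q (Φ 1) := by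
    rw [← pow_apply_eq_of_isometry hG m (Φ 1)]
    simpa using congrArg q (h.pow_mul_left m 1)
  have hC : 0 < C := by
    have := (hbound 1).2
    simp only [Function.comp_apply, norm_one, mul_one] at this
    linarith
  refine eq_one_of_forall_pow_mem_Icc (b := q (Φ 1) / c) (div_pos hΦ1 hC) fun m => ⟨?_, ?_⟩
  · rw [div_le_iff₀ hC, mul_comm, ← horbit m, ← norm_pow]
    exact (hbound _).2
  · rw [le_div_iff₀ hc, mul_comm, ← horbit m, ← norm_pow]
    exact (hbound _).1

lemma exists_isometry_of_semiconj (hq : IsNormFn q) {G : E →ₗ[ℝ] E} (hG : ∀ x, q (G x) = q x)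
    {Φ : ℂ →ₗ[ℝ] E} (hΦ : Function.Injective Φ) {μ : ℂ} (hμ : μ.im ≠ 0)
    (h : Function.Semiconj Φ (μ * ·) G) :
    ∃ F : E →ₗ[ℝ] E, (∀ x, q (F x) = q x) ∧
      1 ≤ opNormFn q (F + LinearMap.id) ∧ 1 ≤ opNormFn q (F - LinearMap.id) := by
  have hμ₁ := hq.norm_eq_one_of_semiconj hG hΦ h
  obtain ⟨k, hk⟩ := Complex.exists_abs_re_pow_le_half hμ₁ hμ
  obtain ⟨hsub, hadd⟩ :=
    Complex.one_le_norm_sub_one_and_norm_add_one (by rw [norm_pow, hμ₁, one_pow]) hk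
  have hF := pow_apply_eq_of_isometry hG k
  refine ⟨G ^ k, hF,
    hq.one_le_opNormFn_of_semiconj (hq.isometry_add_id_le hF) hΦ hadd fun ζ => ?_,
    hq.one_le_opNormFn_of_semiconj (hq.isometry_sub_id_le hF) hΦ hsub fun ζ => ?_⟩
  · simpa [add_mul] using h.pow_mul_left k ζ
  · simpa [sub_mul] using h.pow_mul_left k ζ

theorem exists_isometry_one_le_opNormFn [FiniteDimensional ℝ E] (hq : IsNormFn q)
    {G : E →ₗ[ℝ] E} (hG : ∀ x, q (G x) = q x) (h1 : G ≠ LinearMap.id) (h2 : G ≠ -LinearMap.id) :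
    ∃ F : E →ₗ[ℝ] E, (∀ x, q (F x) = q x) ∧
      1 ≤ opNormFn q (F + LinearMap.id) ∧ 1 ≤ opNormFn q (F - LinearMap.id) := by
  by_cases hreal : ∀ μ ∈ (G.charpoly.map (algebraMap ℝ ℂ)).roots, μ.im = 0
  · exact ⟨G, hG, hq.one_le_opNormFn_of_sq_eq_one hG
      (hq.sq_eq_one_of_forall_roots_im_eq_zero hG hreal) h1 h2⟩
  obtain ⟨μ, hμ, him⟩ := not_forall₂.mp hreal
  let b := Module.finBasis ℝ E
  obtain ⟨z, hz, hGz⟩ := Matrix.exists_mulVec_eq_smul_of_isRoot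
    ((LinearMap.toMatrix b b G).map (algebraMap ℝ ℂ))
    (by rw [Matrix.charpoly_map, LinearMap.charpoly_toMatrix]
        exact Polynomial.isRoot_of_mem_roots hμ)
  have hsemi := semiconj_rePart b hGz
  exact hq.exists_isometry_of_semiconj hG (rePart_injective b hz him hsemi) him hsemi

end IsNormFn

/-- If the isometry group is nontrivial, some isometry is far from ±Id. -/
theorem stmt14 {n : ℕ} (q : EuclideanSpace ℝ (Fin n) → ℝ) (hq : IsNormFn q)
    (hnontriv : ∃ G : EuclideanSpace ℝ (Fin n) →ₗ[ℝ] EuclideanSpace ℝ (Fin n),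
      (∀ x, q (G x) = q x) ∧ G ≠ LinearMap.id ∧ G ≠ -LinearMap.id) :
    ∃ F : EuclideanSpace ℝ (Fin n) →ₗ[ℝ] EuclideanSpace ℝ (Fin n),
      (∀ x, q (F x) = q x) ∧
      1 ≤ min
        (sSup ((fun x => q ((F + (LinearMap.id : EuclideanSpace ℝ (Fin n) →ₗ[ℝ] EuclideanSpace ℝ (Fin n))) x)) '' {x | q x ≤ 1}))
        (sSup ((fun x => q ((F - (LinearMap.id : EuclideanSpace ℝ (Fin n) →ₗ[ℝ] EuclideanSpace ℝ (Fin n))) x)) '' {x | q x ≤ 1})) := by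
  obtain ⟨G, hG, h1, h2⟩ := hnontriv
  obtain ⟨F, hF, hadd, hsub⟩ := hq.exists_isometry_one_le_opNormFn hG h1 h2
  exact ⟨F, hF, le_min hadd hsub⟩
end

section
/- The subset $U=\{[\|\cdot\|_X]: \operatorname{Iso}_X=\{\operatorname{Id},-\operatorname{Id}\}\}$ of norms with trivial autoisometry group is open in the metric space $\mathcal{N}$ of equivalence classes of norms on $\mathbb{R}^n$ modulo positive scaling, equipped with the multiplicative distance $d([\|\cdot\|_X],[\|\cdot\|_Y])=\min\{\mu:\|\cdot\|_X\leq\lambda\|\cdot\|_Y\leq\mu\|\cdot\|_X\text{ for some }\lambda>0\}$: if a sequence of norms each admitting a linear autoisometry other than $\pm\operatorname{Id}$ converges to a norm $\|\cdot\|$, then $\|\cdot\|$ also admits a linear autoisometry other than $\pm\operatorname{Id}$. -/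
open scoped Real

/-! If `μ ∈ distSet Q q`, every linear isometry of `Q` distorts `q` by at most the factor `μ`, so
the isometries of `Q k` are bounded in operator norm uniformly in `k`. A bounded group of
operators has no small subgroups: if `F ≠ 1` is close to `1` and `C` bounds all powers of `F`, the
first power of `F` at distance at least `(C + 1)⁻¹` from `1` is still at distance at most `1`
from `1`, hence far from `-1` too. So each isometry group of `Q k` other than `{±1}` contains an
element uniformly far from `±1`, and a limit point of these elements is an isometry of `q` that
is neither `1` nor `-1`. -/

open Filter Topology

section NormFn

variable {E : Type*} [AddCommGroup E] [Module ℝ E] {q : E → ℝ}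

def IsNormFn.toSeminorm (hq : IsNormFn q) : Seminorm ℝ E :=
  Seminorm.of q hq.2.2.2 fun c x => by rw [hq.2.2.1, Real.norm_eq_abs]

lemma IsNormFn.map_neg_s17 (hq : IsNormFn q) (x : E) : q (-x) = q x :=
  map_neg_eq_map hq.toSeminorm x

lemma IsNormFn.pos_s17 (hq : IsNormFn q) {x : E} (hx : x ≠ 0) : 0 < q x :=
  (hq.1 x).lt_of_ne' fun h => hx ((hq.2.1 x).1 h)

end NormFn

section FiniteDimensional

variable {E : Type*} [NormedAddCommGroup E] [NormedSpace ℝ E] [FiniteDimensional ℝ E]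
  {q : E → ℝ}

lemma IsNormFn.continuous (hq : IsNormFn q) : Continuous q :=
  continuousOn_univ.1 (hq.toSeminorm.convexOn.continuousOn isOpen_univ)

lemma IsNormFn.exists_le_mul_norm (hq : IsNormFn q) : ∃ C, 0 < C ∧ ∀ x, q x ≤ C * ‖x‖ :=
  hq.toSeminorm.bound_of_continuous_normedSpace hq.continuous

lemma IsNormFn.exists_mul_norm_le (hq : IsNormFn q) : ∃ c, 0 < c ∧ ∀ x, c * ‖x‖ ≤ q x := by
  obtain ⟨c, hc, hcq⟩ := (isCompact_sphere (0 : E) 1).exists_forall_le'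
    hq.continuous.continuousOn fun x hx => hq.pos_s17 (ne_zero_of_mem_unit_sphere ⟨x, hx⟩)
  refine ⟨c, hc, fun x => ?_⟩
  rcases eq_or_ne x 0 with rfl | hx
  · simp [hq.1 0]
  have hx' : 0 < ‖x‖ := norm_pos_iff.2 hx
  have hmem : ‖x‖⁻¹ • x ∈ Metric.sphere (0 : E) 1 := by
    simp [norm_smul, hx'.ne']
  have := hcq _ hmem
  rwa [hq.2.2.1, abs_of_pos (inv_pos.2 hx'), inv_mul_eq_div, le_div_iff₀ hx'] at this

lemma IsNormFn.exists_opNorm_le (hq : IsNormFn q) :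
    ∃ C, 0 < C ∧ ∀ (F : E →L[ℝ] E) (μ : ℝ), 0 ≤ μ → (∀ x, q (F x) ≤ μ * q x) → ‖F‖ ≤ C * μ := by
  obtain ⟨b, hb, hbq⟩ := hq.exists_le_mul_norm
  obtain ⟨c, hc, hcq⟩ := hq.exists_mul_norm_le
  refine ⟨b / c, by positivity, fun F μ hμ hF => F.opNorm_le_bound (by positivity) fun x => ?_⟩
  rw [div_mul_eq_mul_div, div_mul_eq_mul_div, le_div_iff₀ hc]
  calc ‖F x‖ * c = c * ‖F x‖ := mul_comm _ _
    _ ≤ μ * q x := (hcq _).trans (hF x)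
    _ ≤ μ * (b * ‖x‖) := by gcongr; exact hbq x
    _ = b * μ * ‖x‖ := by ring

end FiniteDimensional

section distSet

variable {E : Type*} [AddCommGroup E] [Module ℝ E] {Q q : E → ℝ} {μ : ℝ}

lemma multDist_le_of_mem_distSet (hμ : μ ∈ distSet Q q) : multDist Q q ≤ μ :=
  csInf_le ⟨1, fun _ h => h.1⟩ hμ

-- `multDist Q q = 0` when `distSet Q q` is empty, since `sInf ∅ = 0`.
lemma exists_mem_distSet_lt (h : multDist Q q ≠ 0) {ε : ℝ} (hε : 0 < ε) :
    ∃ μ ∈ distSet Q q, μ < multDist Q q + ε :=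
  Real.lt_sInf_add_pos
    (Set.nonempty_iff_ne_empty.2 fun he => h (by rw [multDist, he, Real.sInf_empty])) hε

lemma map_le_mul_and_le_mul_map_of_mem_distSet (hμ : μ ∈ distSet Q q) {F : E → E}
    (hF : ∀ x, Q (F x) = Q x) (x : E) :
    q (F x) ≤ μ * q x ∧ q x ≤ μ * q (F x) := by
  obtain ⟨hμ1, l, hl, h⟩ := hμ
  have hμ0 : 0 ≤ μ := zero_le_one.trans hμ1
  constructor
  · refine le_of_mul_le_mul_left ?_ hl
    calc l * q (F x) ≤ μ * Q x := hF x ▸ (h (F x)).2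
      _ ≤ l * (μ * q x) := by nlinarith [(h x).1]
  · refine le_of_mul_le_mul_left ?_ hl
    calc l * q x ≤ μ * Q (F x) := hF x ▸ (h x).2
      _ ≤ l * (μ * q (F x)) := by nlinarith [(h (F x)).1]

lemma exists_tendsto_mem_distSet {Q : ℕ → E → ℝ}
    (h : Tendsto (fun k => multDist (Q k) q) atTop (𝓝 1)) :
    ∃ μ : ℕ → ℝ, Tendsto μ atTop (𝓝 1) ∧ ∀ᶠ k in atTop, μ k ∈ distSet (Q k) q := by
  choose! μ hμ hμlt using fun k (hk : multDist (Q k) q ≠ 0) =>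
    exists_mem_distSet_lt hk (Nat.one_div_pos_of_nat (n := k))
  have hne := h.eventually_ne one_ne_zero
  refine ⟨μ, ?_, hne.mono hμ⟩
  have hup : Tendsto (fun k : ℕ => multDist (Q k) q + 1 / ((k : ℝ) + 1)) atTop (𝓝 1) := by
    simpa using h.add tendsto_one_div_add_atTop_nhds_zero_nat
  exact tendsto_of_tendsto_of_tendsto_of_le_of_le' h hup
    (hne.mono fun k hk => multDist_le_of_mem_distSet (hμ k hk))
    (hne.mono fun k hk => (hμlt k hk).le)

end distSet

section Escape

lemma sum_pow_sub_one_mul_sub_one {R : Type*} [Ring R] (F : R) (m : ℕ) :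
    (∑ j ∈ Finset.range m, (F ^ j - 1)) * (F - 1) = F ^ m - 1 - m • (F - 1) := by
  rw [Finset.sum_sub_distrib, sub_mul, geom_sum_mul, Finset.sum_const, Finset.card_range,
    smul_mul_assoc, one_mul]

variable {A : Type*} [NormedRing A] [NormedAlgebra ℝ A]

lemma nat_mul_norm_sub_one_le_norm_pow_sub_one {F : A} {δ : ℝ} {m : ℕ}
    (h : ∀ j < m, ‖F ^ j - 1‖ ≤ δ) :
    m * ((1 - δ) * ‖F - 1‖) ≤ ‖F ^ m - 1‖ := by
  have hsum : ‖∑ j ∈ Finset.range m, (F ^ j - 1)‖ ≤ m * δ := by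
    simpa using norm_sum_le_of_le _ fun j hj => h j (Finset.mem_range.1 hj)
  have key : m • (F - 1) = F ^ m - 1 - (∑ j ∈ Finset.range m, (F ^ j - 1)) * (F - 1) := by
    rw [sum_pow_sub_one_mul_sub_one]; abel
  have := calc (m : ℝ) * ‖F - 1‖ = ‖m • (F - 1)‖ := by rw [RCLike.norm_nsmul ℝ, nsmul_eq_mul]
    _ ≤ ‖F ^ m - 1‖ + ‖∑ j ∈ Finset.range m, (F ^ j - 1)‖ * ‖F - 1‖ := by
      rw [key]; exact (norm_sub_le _ _).trans (by gcongr; exact norm_mul_le _ _)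
    _ ≤ ‖F ^ m - 1‖ + m * δ * ‖F - 1‖ := by gcongr
  linarith

variable [NormOneClass A]

lemma exists_norm_pow_sub_one_ge {F : A} {C : ℝ} (hC : ∀ j : ℕ, ‖F ^ j‖ ≤ C) (hF : F ≠ 1)
    (hF1 : ‖F - 1‖ < (C + 1)⁻¹) :
    ∃ m : ℕ, (C + 1)⁻¹ ≤ ‖F ^ m - 1‖ ∧ (C + 1)⁻¹ ≤ ‖F ^ m + 1‖ := by
  set δ := (C + 1)⁻¹
  have hC1 : 1 ≤ C := by simpa using hC 0
  have hδ : 0 < δ := by positivity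
  have hδ1 : δ ≤ 1 / 2 := by
    rw [inv_le_comm₀ (by positivity) (by norm_num)]; linarith
  have hCδ : C * δ + δ = 1 := by rw [← add_one_mul, mul_inv_cancel₀ (by positivity)]
  have hs : ∃ m : ℕ, δ ≤ ‖F ^ m - 1‖ := by
    by_contra! hlt
    have ha : 0 < (1 - δ) * ‖F - 1‖ := mul_pos (by linarith) (norm_pos_iff.2 (sub_ne_zero.2 hF))
    obtain ⟨m, hm⟩ := exists_nat_gt (δ / ((1 - δ) * ‖F - 1‖))
    rw [div_lt_iff₀ ha] at hm
    linarith [hlt m, nat_mul_norm_sub_one_le_norm_pow_sub_one (m := m) fun j _ => (hlt j).le]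
  classical
  obtain ⟨p, hp⟩ : ∃ p, Nat.find hs = p + 1 :=
    Nat.exists_eq_succ_of_ne_zero fun h0 => by
      have := Nat.find_spec hs
      rw [h0, pow_zero, sub_self, norm_zero] at this
      linarith
  have hp_lt : ‖F ^ p - 1‖ < δ := not_le.1 (Nat.find_min hs (hp ▸ p.lt_succ_self))
  have hle : ‖F ^ (p + 1) - 1‖ ≤ 1 := by
    have hsplit : F ^ (p + 1) - 1 = F ^ p * (F - 1) + (F ^ p - 1) := by
      rw [pow_succ, mul_sub, mul_one]; abel
    calc ‖F ^ (p + 1) - 1‖ ≤ ‖F ^ p‖ * ‖F - 1‖ + ‖F ^ p - 1‖ := by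
          rw [hsplit]; exact (norm_add_le _ _).trans (by gcongr; exact norm_mul_le _ _)
      _ ≤ C * δ + δ := by gcongr; exact hC p
      _ = 1 := hCδ
  refine ⟨p + 1, hp ▸ Nat.find_spec hs, ?_⟩
  have h2 : ‖(2 : A)‖ = 2 := by
    simpa [two_smul, one_add_one_eq_two] using RCLike.norm_nsmul ℝ 2 (1 : A)
  calc δ ≤ ‖(2 : A)‖ - ‖F ^ (p + 1) - 1‖ := by linarith
    _ ≤ ‖2 + (F ^ (p + 1) - 1)‖ := norm_sub_le_norm_add _ _
    _ = ‖F ^ (p + 1) + 1‖ := by rw [← one_add_one_eq_two]; abel_nf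

lemma Submonoid.exists_mem_inv_le_norm_sub_one_and_add_one {S : Submonoid A} {C : ℝ}
    (hC : ∀ G ∈ S, ‖G‖ ≤ C) (hneg : ∀ G ∈ S, -G ∈ S) {F : A} (hF : F ∈ S) (hF1 : F ≠ 1)
    (hF2 : F ≠ -1) : ∃ H ∈ S, (C + 1)⁻¹ ≤ ‖H - 1‖ ∧ (C + 1)⁻¹ ≤ ‖H + 1‖ := by
  by_cases h1 : ‖F - 1‖ < (C + 1)⁻¹
  · obtain ⟨m, hm⟩ := exists_norm_pow_sub_one_ge (fun j => hC _ (S.pow_mem hF j)) hF1 h1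
    exact ⟨F ^ m, S.pow_mem hF m, hm⟩
  by_cases h2 : ‖F + 1‖ < (C + 1)⁻¹
  · have hFn : -F ≠ 1 := fun h => hF2 (neg_eq_iff_eq_neg.1 h)
    obtain ⟨m, hm⟩ := exists_norm_pow_sub_one_ge (fun j => hC _ (S.pow_mem (hneg F hF) j)) hFn
      (by rwa [← neg_add', norm_neg])
    exact ⟨(-F) ^ m, S.pow_mem (hneg F hF) m, hm⟩
  exact ⟨F, hF, not_lt.1 h1, not_lt.1 h2⟩

end Escape

def isometrySubmonoid {E : Type*} [NormedAddCommGroup E] [NormedSpace ℝ E] (Q : E → ℝ) :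
    Submonoid (E →L[ℝ] E) where
  carrier := {F | ∀ x, Q (F x) = Q x}
  one_mem' _ := rfl
  mul_mem' hF hG x := (hF _).trans (hG x)

section Limit

variable {E : Type*} [NormedAddCommGroup E] [NormedSpace ℝ E] {q : E → ℝ}

lemma map_eq_of_tendsto (hq : Continuous q) {H : ℕ → E →L[ℝ] E} {L : E →L[ℝ] E}
    (hH : Tendsto H atTop (𝓝 L)) {μ : ℕ → ℝ} (hμ : Tendsto μ atTop (𝓝 1))
    (happrox : ∀ᶠ k in atTop, ∀ x, q (H k x) ≤ μ k * q x ∧ q x ≤ μ k * q (H k x)) (x : E) :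
    q (L x) = q x := by
  have hHx : Tendsto (fun k => q (H k x)) atTop (𝓝 (q (L x))) :=
    (hq.tendsto _).comp (((continuous_eval_const x).tendsto L).comp hH)
  refine le_antisymm ?_ ?_
  · simpa using le_of_tendsto_of_tendsto hHx (hμ.mul_const (q x))
      (happrox.mono fun k hk => (hk x).1)
  · simpa using le_of_tendsto_of_tendsto tendsto_const_nhds (hμ.mul hHx)
      (happrox.mono fun k hk => (hk x).2)

variable [FiniteDimensional ℝ E]

lemma exists_isometry_ne_of_approx (hq : Continuous q) {μ : ℕ → ℝ} (hμ : Tendsto μ atTop (𝓝 1))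
    {R δ : ℝ} (hδ : 0 < δ)
    (h : ∀ᶠ k in atTop, ∃ H : E →L[ℝ] E, ‖H‖ ≤ R ∧ δ ≤ ‖H - 1‖ ∧ δ ≤ ‖H + 1‖ ∧
      ∀ x, q (H x) ≤ μ k * q x ∧ q x ≤ μ k * q (H x)) :
    ∃ L : E →L[ℝ] E, (∀ x, q (L x) = q x) ∧ L ≠ 1 ∧ L ≠ -1 := by
  obtain ⟨N, hN⟩ := eventually_atTop.1 h
  choose! H hHR hH1 hH2 hHq using hN
  obtain ⟨L, -, φ, hφ, hL⟩ := tendsto_subseq_of_frequently_bounded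
    (Metric.isBounded_closedBall (x := 0) (r := R))
    (eventually_atTop.2 ⟨N, fun k hk => mem_closedBall_zero_iff.2 (hHR k hk)⟩).frequently
  have hφN : ∀ᶠ j in atTop, N ≤ φ j := hφ.tendsto_atTop.eventually_ge_atTop N
  refine ⟨L, map_eq_of_tendsto hq hL (hμ.comp hφ.tendsto_atTop)
    (hφN.mono fun j hj => hHq _ hj), ?_, ?_⟩
  · have : δ ≤ ‖L - 1‖ := ge_of_tendsto (hL.sub_const 1).norm (hφN.mono fun j hj => hH1 _ hj)
    rintro rfl
    rw [sub_self, norm_zero] at this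
    linarith
  · have : δ ≤ ‖L + 1‖ := ge_of_tendsto (hL.add_const 1).norm (hφN.mono fun j hj => hH2 _ hj)
    rintro rfl
    rw [neg_add_cancel, norm_zero] at this
    linarith

end Limit

theorem stmt17_general {n : ℕ} (Q : ℕ → (EuclideanSpace ℝ (Fin n) → ℝ))
    (hQ : ∀ k, IsNormFn (Q k))
    (q : EuclideanSpace ℝ (Fin n) → ℝ) (hq : IsNormFn q)
    (hiso : ∀ k, ∃ F : EuclideanSpace ℝ (Fin n) →ₗ[ℝ] EuclideanSpace ℝ (Fin n),
      (∀ x, Q k (F x) = Q k x) ∧ F ≠ LinearMap.id ∧ F ≠ -LinearMap.id)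
    (hconv : Filter.Tendsto (fun k => multDist (Q k) q) Filter.atTop (nhds 1)) :
    ∃ F : EuclideanSpace ℝ (Fin n) →ₗ[ℝ] EuclideanSpace ℝ (Fin n),
      (∀ x, q (F x) = q x) ∧ F ≠ LinearMap.id ∧ F ≠ -LinearMap.id := by
  obtain ⟨F₀, -, hF₀, -⟩ := hiso 0
  obtain ⟨x₀, hx₀⟩ := DFunLike.ne_iff.1 hF₀
  have : Nontrivial (EuclideanSpace ℝ (Fin n)) := nontrivial_of_ne _ _ hx₀
  obtain ⟨μ, hμ, hμQ⟩ := exists_tendsto_mem_distSet hconv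
  obtain ⟨C, hC, hCF⟩ := hq.exists_opNorm_le
  have hsep : ∀ᶠ k in atTop, ∃ H : EuclideanSpace ℝ (Fin n) →L[ℝ] EuclideanSpace ℝ (Fin n),
      ‖H‖ ≤ C * 2 ∧ (C * 2 + 1)⁻¹ ≤ ‖H - 1‖ ∧ (C * 2 + 1)⁻¹ ≤ ‖H + 1‖ ∧
      ∀ x, q (H x) ≤ μ k * q x ∧ q x ≤ μ k * q (H x) := by
    filter_upwards [hμQ, hμ.eventually (ge_mem_nhds one_lt_two)] with k hk hk2
    have hbound : ∀ G ∈ isometrySubmonoid (Q k), ‖G‖ ≤ C * 2 := fun G hG =>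
      (hCF G _ (zero_le_one.trans hk.1) fun x =>
        (map_le_mul_and_le_mul_map_of_mem_distSet hk hG x).1).trans (by gcongr)
    obtain ⟨F, hFQ, hF1, hF2⟩ := hiso k
    obtain ⟨H, hHQ, hH1, hH2⟩ := Submonoid.exists_mem_inv_le_norm_sub_one_and_add_one hbound
      (fun G hG x => ((hQ k).map_neg_s17 _).trans (hG x)) (F := LinearMap.toContinuousLinearMap F)
      hFQ (fun h => hF1 (by rw [← LinearMap.coe_toContinuousLinearMap F, h]; rfl))
      (fun h => hF2 (by rw [← LinearMap.coe_toContinuousLinearMap F, h]; rfl))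
    exact ⟨H, hbound H hHQ, hH1, hH2, map_le_mul_and_le_mul_map_of_mem_distSet hk hHQ⟩
  obtain ⟨L, hLq, hL1, hL2⟩ := exists_isometry_ne_of_approx hq.continuous hμ (by positivity) hsep
  exact ⟨L, hLq, fun h => hL1 (ContinuousLinearMap.coe_injective h),
    fun h => hL2 (ContinuousLinearMap.coe_injective h)⟩

/-- The set of norms with trivial isometry group is open: its complement is closed. -/
theorem stmt17 {n : ℕ} (hn : 2 ≤ n) (Q : ℕ → (EuclideanSpace ℝ (Fin n) → ℝ))
    (hQ : ∀ k, IsNormFn (Q k))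
    (q : EuclideanSpace ℝ (Fin n) → ℝ) (hq : IsNormFn q)
    (hiso : ∀ k, ∃ F : EuclideanSpace ℝ (Fin n) →ₗ[ℝ] EuclideanSpace ℝ (Fin n),
      (∀ x, Q k (F x) = Q k x) ∧ F ≠ LinearMap.id ∧ F ≠ -LinearMap.id)
    (hconv : Filter.Tendsto (fun k => multDist (Q k) q) Filter.atTop (nhds 1)) :
    ∃ F : EuclideanSpace ℝ (Fin n) →ₗ[ℝ] EuclideanSpace ℝ (Fin n),
      (∀ x, q (F x) = q x) ∧ F ≠ LinearMap.id ∧ F ≠ -LinearMap.id :=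
  stmt17_general Q hQ q hq hiso hconv
end
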